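/- arXiv:1101.4416 — 8 statements merged into one kernel-verified Lean document; each statement's English description precedes it below -/
import Mathlib

section
/- If X ⊆ ℝⁿ satisfies e_r(X) = σ(X) for some r > 0 and a similarity transformation σ with scaling factor α, then for every positive integer i, e_{r_i}(X) = σⁱ(X), where r_i = r · (1 + α + α² + ... + α^{i-1}). -/
/-!
Erosion by `r > 0` keeps the points whose open `r`-ball lies in `X`. Since in a normed space
every point of `ball x (r + s)` is reached from `x` by a step shorter than `s` followed by one
shorter than `r`, eroding by `r` and then by `s` is eroding by `r + s`. A similarity with ratio `α`
carries erosion by `s` to erosion by `α * s`, so `e_{r_{i+1}} = e_{α r_i} ∘ e_r` turns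
`e_r(X) = σ(X)` into `e_{r_{i+1}}(X) = σ(e_{r_i}(X))`, and induction on `i` finishes.
-/

open Metric Set

/-- The erosion of `X` by radius `r`: points of `X` at distance `≥ r` from the complement. -/
def eros {n : ℕ} (r : ℝ) (X : Set (EuclideanSpace ℝ (Fin n))) :
    Set (EuclideanSpace ℝ (Fin n)) :=
  {x ∈ X | ∀ y ∉ X, r ≤ dist x y}

theorem ball_subset_iff_forall_ball_subset {E : Type*} [SeminormedAddCommGroup E]
    [NormedSpace ℝ E] {r s : ℝ} (hr : 0 < r) (hs : 0 < s) {x : E} {X : Set E} :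
    ball x (r + s) ⊆ X ↔ ∀ y ∈ ball x s, ball y r ⊆ X := by
  constructor
  · intro hX y hy z hz
    apply hX
    calc dist z x ≤ dist z y + dist y x := dist_triangle z y x
      _ < r + s := add_lt_add (mem_ball.1 hz) (mem_ball.1 hy)
  · intro hX z hz
    obtain ⟨y, hxy, hyz⟩ := exists_dist_lt_lt hs hr (mem_ball'.1 hz)
    exact hX y (mem_ball'.2 hxy) (mem_ball'.2 hyz)

section Erosion

variable {n : ℕ}

theorem eros_eq_setOf_ball_subset {r : ℝ} (hr : 0 < r) (X : Set (EuclideanSpace ℝ (Fin n))) :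
    eros r X = {x | ball x r ⊆ X} := by
  ext x
  constructor
  · rintro ⟨-, hfar⟩ y hy
    by_contra hyX
    exact (hfar y hyX).not_gt (mem_ball'.1 hy)
  · intro hball
    exact ⟨hball (mem_ball_self hr), fun y hy => not_lt.1 fun hlt => hy (hball (mem_ball'.2 hlt))⟩

theorem eros_eros {r s : ℝ} (hr : 0 < r) (hs : 0 < s) (X : Set (EuclideanSpace ℝ (Fin n))) :
    eros s (eros r X) = eros (r + s) X := by
  rw [eros_eq_setOf_ball_subset hr, eros_eq_setOf_ball_subset hs,
    eros_eq_setOf_ball_subset (add_pos hr hs)]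
  ext x
  exact (ball_subset_iff_forall_ball_subset hr hs).symm

variable {σ : EuclideanSpace ℝ (Fin n) → EuclideanSpace ℝ (Fin n)} {α : ℝ}

theorem injective_of_dist_eq_mul (hα : 0 < α) (hsim : ∀ x y, dist (σ x) (σ y) = α * dist x y) :
    Function.Injective σ := by
  intro a b hab
  have : α * dist a b = 0 := by rw [← hsim, hab, dist_self]
  exact dist_eq_zero.1 ((mul_eq_zero.1 this).resolve_left hα.ne')

theorem image_eros (hσ : Function.Surjective σ) (hα : 0 < α)
    (hsim : ∀ x y, dist (σ x) (σ y) = α * dist x y) (s : ℝ) (X : Set (EuclideanSpace ℝ (Fin n))) :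
    σ '' eros s X = eros (α * s) (σ '' X) := by
  have hinj := injective_of_dist_eq_mul hα hsim
  ext z
  obtain ⟨x, rfl⟩ := hσ z
  have hcompl : ∀ y, σ y ∉ σ '' X ↔ y ∉ X := fun y => hinj.mem_set_image.not
  simp only [eros, hinj.mem_set_image, mem_sep_iff, and_congr_right_iff]
  intro _
  conv_rhs => rw [hσ.forall]
  simp only [hcompl, hsim, mul_le_mul_iff_right₀ hα]

end Erosion

theorem erosion_iterate {n : ℕ} (X : Set (EuclideanSpace ℝ (Fin n)))
    (σ : EuclideanSpace ℝ (Fin n) → EuclideanSpace ℝ (Fin n))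
    (hσ : Function.Surjective σ) (α : ℝ) (hα : 0 < α)
    (hsim : ∀ x y, dist (σ x) (σ y) = α * dist x y)
    (r : ℝ) (hr : 0 < r) (h : eros r X = σ '' X) :
    ∀ i : ℕ, 1 ≤ i → eros (r * ∑ k ∈ Finset.range i, α ^ k) X = (σ^[i]) '' X := by
  intro i hi
  induction i, hi using Nat.le_induction with
  | base => simpa using h
  | succ i hi ih =>
    set s := r * ∑ k ∈ Finset.range i, α ^ k
    have hs : 0 < s :=
      mul_pos hr (Finset.sum_pos (fun k _ => pow_pos hα k) (Finset.nonempty_range_iff.2 (by omega)))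
    calc eros (r * ∑ k ∈ Finset.range (i + 1), α ^ k) X = eros (r + α * s) X := by
          simp only [s, geom_sum_succ]; ring_nf
      _ = eros (α * s) (σ '' X) := by rw [← eros_eros hr (mul_pos hα hs), h]
      _ = σ '' (σ^[i] '' X) := by rw [← image_eros hσ hα hsim, ih]
      _ = σ^[i + 1] '' X := by rw [Function.iterate_succ', image_comp]
end

section
/- Let A ⊆ B be subsets of the unit sphere S^{n-1}, and suppose φ is an isometry of the sphere with φ(A) = B. Then A is dense in B. -/
/-!
Starting from `b = φ a` with `a ∈ A`, the inclusion `A ⊆ φ '' A` yields a backward orbit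
`a = u₀, u₁, u₂, …` in `A` with `φ uₖ₊₁ = uₖ`. By compactness two of its points `uᵢ, uⱼ` (`i < j`)
are `ε`-close; pushing them forward `i + 1` times by the non-expanding map `φ` gives
`dist b u_{j-i-1} < ε`.
-/

open Metric Set

section BackwardOrbit

variable {X : Type*}

theorem exists_backward_orbit {f : X → X} {A : Set X} (hA : A ⊆ f '' A) {a : X} (ha : a ∈ A) :
    ∃ u : ℕ → X, u 0 = a ∧ (∀ k, u k ∈ A) ∧ ∀ k, f (u (k + 1)) = u k := by
  have hpre : ∀ x : A, ∃ y : A, f y = x := fun x => by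
    obtain ⟨y, hy, hyx⟩ := hA x.2
    exact ⟨⟨y, hy⟩, hyx⟩
  choose g hg using hpre
  refine ⟨fun k => (g^[k] ⟨a, ha⟩ : A), rfl, fun k => Subtype.prop _, fun k => ?_⟩
  simp only [Function.iterate_succ_apply', hg]

theorem iterate_backward_orbit {f : X → X} {u : ℕ → X} (hu : ∀ k, f (u (k + 1)) = u k)
    (i k : ℕ) : f^[i] (u (k + i)) = u k := by
  induction i with
  | zero => rfl
  | succ i ih => rw [Function.iterate_succ_apply, ← Nat.add_assoc, hu, ih]

theorem dist_backward_orbit_le [PseudoMetricSpace X] {f : X → X} (hf : LipschitzWith 1 f)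
    {u : ℕ → X} (hu : ∀ k, f (u (k + 1)) = u k) (i k l : ℕ) :
    dist (u k) (u l) ≤ dist (u (k + i)) (u (l + i)) := by
  simpa [iterate_backward_orbit hu] using (hf.iterate i).dist_le_mul (u (k + i)) (u (l + i))

end BackwardOrbit

theorem exists_lt_dist_lt_of_compactSpace {X : Type*} [PseudoMetricSpace X] [CompactSpace X]
    (u : ℕ → X) {ε : ℝ} (hε : 0 < ε) : ∃ i j, i < j ∧ dist (u i) (u j) < ε := by
  obtain ⟨_, σ, hσ, hconv⟩ := CompactSpace.tendsto_subseq u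
  obtain ⟨N, hN⟩ := Metric.cauchySeq_iff.mp hconv.cauchySeq ε hε
  exact ⟨σ N, σ (N + 1), hσ N.lt_succ_self, hN N le_rfl (N + 1) N.le_succ⟩

theorem image_subset_closure_of_subset_image {X : Type*} [PseudoMetricSpace X] [CompactSpace X]
    {f : X → X} (hf : LipschitzWith 1 f) {A : Set X} (hA : A ⊆ f '' A) :
    f '' A ⊆ closure A := by
  rintro _ ⟨a, ha, rfl⟩
  refine Metric.mem_closure_iff.mpr fun ε hε => ?_
  obtain ⟨u, rfl, huA, hu⟩ := exists_backward_orbit hA ha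
  obtain ⟨i, j, hij, hclose⟩ := exists_lt_dist_lt_of_compactSpace u hε
  obtain ⟨p, rfl⟩ := Nat.exists_eq_add_of_lt hij
  refine ⟨u p, huA p, ?_⟩
  calc dist (f (u 0)) (u p) = dist (f (u 0)) (f (u (p + 1))) := by rw [hu]
    _ ≤ dist (u 0) (u (p + 1)) := by simpa using hf.dist_le_mul (u 0) (u (p + 1))
    _ ≤ dist (u (0 + i)) (u (p + 1 + i)) := dist_backward_orbit_le hf hu i 0 (p + 1)
    _ < ε := by rwa [Nat.zero_add, Nat.add_comm (p + 1), ← Nat.add_assoc]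

theorem dense_of_isometry_image_superset_general {n : ℕ}
    (φ : Metric.sphere (0 : EuclideanSpace ℝ (Fin n)) 1 → Metric.sphere (0 : EuclideanSpace ℝ (Fin n)) 1)
    (hφ : Isometry φ)
    (A B : Set (Metric.sphere (0 : EuclideanSpace ℝ (Fin n)) 1))
    (hAB : A ⊆ B) (himg : φ '' A = B) :
    B ⊆ closure A := by
  subst himg
  exact image_subset_closure_of_subset_image hφ.lipschitz hAB

theorem dense_of_isometry_image_superset {n : ℕ}
    (φ : Metric.sphere (0 : EuclideanSpace ℝ (Fin n)) 1 → Metric.sphere (0 : EuclideanSpace ℝ (Fin n)) 1)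
    (hφ : Isometry φ) (hsurj : Function.Surjective φ)
    (A B : Set (Metric.sphere (0 : EuclideanSpace ℝ (Fin n)) 1))
    (hAB : A ⊆ B) (himg : φ '' A = B) :
    B ⊆ closure A :=
  dense_of_isometry_image_superset_general φ hφ A B hAB himg
end

section
/- A closed set X ⊆ ℝⁿ that is not contained in any affine hyperplane is convex if and only if its ball-convexity bc(X) is infinite. -/
/-!
If `X` is closed and convex, Hahn–Banach separates each point outside `X` from `X` by an open
half-space, and an open half-space is a union of balls of any radius. Conversely, suppose each
`z ∉ X` lies in balls of arbitrarily large radius missing `X`. As the radius grows these balls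
tend to a half-space with `z` on its boundary and `X` outside it (along a subsequence of the
directions from `z` to the centres), so `z` is not interior to the convex hull of `X`. Since `X`
spans the space affinely, that hull has nonempty interior, and a convex set with nonempty
interior lies in the closure of its interior, hence in `X`.
-/

open Metric Set

/-- The complement of `X` is a union of open balls of radius `R`. -/
def ComplUnionBalls {n : ℕ} (X : Set (EuclideanSpace ℝ (Fin n))) (R : ℝ) : Prop :=
  ∃ C : Set (EuclideanSpace ℝ (Fin n)), Xᶜ = ⋃ c ∈ C, Metric.ball c R

open Filter Topology
open scoped RealInnerProductSpace

section InnerProductSpace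

variable {E : Type*} [NormedAddCommGroup E] [InnerProductSpace ℝ E]

theorem exists_ball_subset_setOf_inner_lt (w : E) {u : ℝ} {y : E} (hy : ⟪w, y⟫ < u) {R : ℝ}
    (hR : 0 < R) : ∃ c, y ∈ ball c R ∧ ball c R ⊆ {x | ⟪w, x⟫ < u} := by
  rcases eq_or_ne w 0 with rfl | hw
  · exact ⟨y, mem_ball_self hR, fun x _ => by simpa using hy⟩
  have hw' : 0 < ‖w‖ := norm_pos_iff.2 hw
  -- on the ball chosen below, `⟪w, ·⟫` stays below `⟪w, y⟫ + δ * ‖w‖ ≤ u`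
  set δ := min R ((u - ⟪w, y⟫) / ‖w‖)
  have hδ : 0 < δ := lt_min hR (div_pos (sub_pos.2 hy) hw')
  have hδu : δ * ‖w‖ ≤ u - ⟪w, y⟫ := (le_div_iff₀ hw').1 (min_le_right _ _)
  set c := y - ((R - δ) / ‖w‖) • w
  have hyc : ‖y - c‖ = R - δ := by
    rw [sub_sub_cancel, norm_smul,
      Real.norm_of_nonneg (div_nonneg (sub_nonneg.2 (min_le_left _ _)) hw'.le),
      div_mul_cancel₀ _ hw'.ne']
  refine ⟨c, by rw [mem_ball, dist_eq_norm, hyc]; linarith, fun x hx => ?_⟩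
  have hxc : ⟪w, x - c⟫ < ‖w‖ * R :=
    (real_inner_le_norm w _).trans_lt (mul_lt_mul_of_pos_left (mem_ball_iff_norm.1 hx) hw')
  have hc : ⟪w, c⟫ = ⟪w, y⟫ - (R - δ) * ‖w‖ := by
    rw [inner_sub_right, real_inner_smul_right, real_inner_self_eq_norm_sq]
    field_simp
  have hx' : ⟪w, x⟫ = ⟪w, x - c⟫ + ⟪w, c⟫ := by rw [← inner_add_right, sub_add_cancel]
  show ⟪w, x⟫ < u
  linarith

theorem Convex.exists_ball_subset_compl [CompleteSpace E] {X : Set E} (hconv : Convex ℝ X)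
    (hX : IsClosed X) {y : E} (hy : y ∉ X) {R : ℝ} (hR : 0 < R) :
    ∃ c, y ∈ ball c R ∧ ball c R ⊆ Xᶜ := by
  obtain ⟨f, u, hfy, hfX⟩ := geometric_hahn_banach_point_closed hconv hX hy
  set w := (InnerProductSpace.toDual ℝ E).symm f
  have hw : ∀ x, ⟪w, x⟫ = f x := fun x => InnerProductSpace.toDual_symm_apply
  obtain ⟨c, hyc, hcu⟩ := exists_ball_subset_setOf_inner_lt w (by rwa [hw]) hR
  refine ⟨c, hyc, fun x hx hxX => ?_⟩
  have hfx : f x < u := hw x ▸ hcu hx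
  exact (hfX x hxX).not_gt hfx

theorem two_inner_sub_lt_norm_sq_of_dist_lt {x z c : E} (h : dist z c < dist x c) :
    2 * ⟪c - z, x - z⟫ < ‖x - z‖ ^ 2 := by
  have hsq : ‖x - c‖ ^ 2 = ‖x - z‖ ^ 2 - 2 * ⟪c - z, x - z⟫ + ‖c - z‖ ^ 2 := by
    rw [real_inner_comm, ← norm_sub_sq_real, sub_sub_sub_cancel_right]
  rw [dist_eq_norm, dist_eq_norm, ← norm_neg, neg_sub] at h
  nlinarith [norm_nonneg (c - z)]

variable [FiniteDimensional ℝ E]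

theorem exists_norm_eq_one_forall_inner_nonpos {X : Set E} {z : E} {c : ℕ → E}
    (hc : Tendsto (fun k => ‖c k - z‖) atTop atTop)
    (hX : ∀ k, ∀ x ∈ X, dist z (c k) < dist x (c k)) :
    ∃ w, ‖w‖ = 1 ∧ ∀ x ∈ X, ⟪w, x - z⟫ ≤ 0 := by
  set v := fun k => ‖c k - z‖⁻¹ • (c k - z)
  have hv : ∀ᶠ k in atTop, v k ∈ sphere (0 : E) 1 := by
    filter_upwards [hc.eventually_gt_atTop 0] with k hk
    exact mem_sphere_zero_iff_norm.2 (norm_smul_inv_norm (norm_pos_iff.1 hk))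
  obtain ⟨w, hw, φ, hφ, hvw⟩ := (isCompact_sphere (0 : E) 1).tendsto_subseq' hv.frequently
  refine ⟨w, mem_sphere_zero_iff_norm.1 hw, fun x hx => ?_⟩
  have hbound : ∀ k, ⟪v k, x - z⟫ ≤ ‖c k - z‖⁻¹ * (‖x - z‖ ^ 2 / 2) := fun k => by
    rw [real_inner_smul_left]
    exact mul_le_mul_of_nonneg_left
      (by linarith [two_inner_sub_lt_norm_sq_of_dist_lt (hX k x hx)]) (inv_nonneg.2 (norm_nonneg _))
  have hlim : Tendsto (fun k => ‖c k - z‖⁻¹ * (‖x - z‖ ^ 2 / 2)) atTop (𝓝 0) := by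
    simpa using hc.inv_tendsto_atTop.mul_const (‖x - z‖ ^ 2 / 2)
  exact le_of_tendsto_of_tendsto' (hvw.inner tendsto_const_nhds) (hlim.comp hφ.tendsto_atTop)
    fun k => hbound (φ k)

theorem exists_ne_zero_forall_le_of_forall_exists_ball {X : Set E} (hX : X.Nonempty) {z : E}
    (h : ∀ R > 0, ∃ c, z ∈ ball c R ∧ ball c R ⊆ Xᶜ) :
    ∃ f : E →L[ℝ] ℝ, f ≠ 0 ∧ ∀ x ∈ X, f x ≤ f z := by
  obtain ⟨a, ha⟩ := hX
  choose c hzc hcX using fun k : ℕ => h (k + 1) k.cast_add_one_pos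
  have hfar : ∀ k : ℕ, ∀ x ∈ X, (k : ℝ) + 1 ≤ dist x (c k) := fun k x hx =>
    not_lt.1 fun hxc => hcX k hxc hx
  have hc : Tendsto (fun k => ‖c k - z‖) atTop atTop := by
    refine tendsto_atTop_mono (fun k => ?_)
      (tendsto_atTop_add_const_right _ (1 - dist a z) tendsto_natCast_atTop_atTop)
    rw [← dist_eq_norm]
    linarith [hfar k a ha, dist_triangle a z (c k), dist_comm a z, dist_comm z (c k)]
  obtain ⟨w, hw, hwX⟩ := exists_norm_eq_one_forall_inner_nonpos hc fun k x hx =>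
    (mem_ball.1 (hzc k)).trans_le (hfar k x hx)
  refine ⟨innerSL ℝ w, fun h0 => ?_, fun x hx => ?_⟩
  · have := congrArg (· w) h0
    simp [hw] at this
  · simpa [inner_sub_right] using hwX x hx

end InnerProductSpace

section NormedSpace

variable {F : Type*} [NormedAddCommGroup F] [NormedSpace ℝ F]

theorem ContinuousLinearMap.eq_zero_of_mem_interior_of_forall_le (f : F →L[ℝ] ℝ) {S : Set F}
    {z : F} (hz : z ∈ interior S) (h : ∀ y ∈ S, f y ≤ f z) : f = 0 :=
  IsLocalMax.hasFDerivAt_eq_zero (mem_of_superset (mem_interior_iff_mem_nhds.1 hz) h)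
    f.hasFDerivAt

theorem IsClosed.convex_of_forall_notMem_exists_le {X : Set F} (hX : IsClosed X)
    (hint : (interior (convexHull ℝ X)).Nonempty)
    (h : ∀ z ∉ X, ∃ f : F →L[ℝ] ℝ, f ≠ 0 ∧ ∀ x ∈ X, f x ≤ f z) : Convex ℝ X := by
  have hsub : interior (convexHull ℝ X) ⊆ X := fun z hz => by_contra fun hzX => by
    obtain ⟨f, hf, hfX⟩ := h z hzX
    exact hf (f.eq_zero_of_mem_interior_of_forall_le hz
      (convexHull_min hfX (convex_halfSpace_le f.toLinearMap.isLinear (f z))))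
  rw [← convexHull_eq_self]
  refine (subset_convexHull ℝ X).antisymm' ?_
  calc convexHull ℝ X ⊆ closure (convexHull ℝ X) := subset_closure
    _ = closure (interior (convexHull ℝ X)) :=
      ((convex_convexHull ℝ X).closure_interior_eq_closure_of_nonempty_interior hint).symm
    _ ⊆ closure X := closure_mono hsub
    _ = X := hX.closure_eq

theorem exists_ne_zero_forall_eq_of_affineSpan_ne_top [FiniteDimensional ℝ F] {X : Set F}
    {a : F} (ha : a ∈ X) (h : affineSpan ℝ X ≠ ⊤) :
    ∃ f : F →L[ℝ] ℝ, f ≠ 0 ∧ ∀ x ∈ X, f x = f a := by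
  have hdir : (affineSpan ℝ X).direction < ⊤ := lt_top_iff_ne_top.2 fun htop =>
    h ((AffineSubspace.direction_eq_top_iff_of_nonempty ⟨a, mem_affineSpan ℝ ha⟩).1 htop)
  obtain ⟨g, hg, hker⟩ := Submodule.exists_le_ker_of_lt_top _ hdir
  refine ⟨LinearMap.toContinuousLinearMap g, by simpa using hg, fun x hx => ?_⟩
  have := hker (AffineSubspace.vsub_mem_direction (mem_affineSpan ℝ hx) (mem_affineSpan ℝ ha))
  simpa [sub_eq_zero] using this

end NormedSpace

theorem complUnionBalls_iff {n : ℕ} {X : Set (EuclideanSpace ℝ (Fin n))} {R : ℝ} :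
    ComplUnionBalls X R ↔ ∀ y ∉ X, ∃ c, y ∈ ball c R ∧ ball c R ⊆ Xᶜ := by
  constructor
  · rintro ⟨C, hC⟩ y hy
    obtain ⟨c, hcC, hyc⟩ := mem_iUnion₂.1 (hC ▸ hy : y ∈ ⋃ c ∈ C, ball c R)
    exact ⟨c, hyc, hC ▸ subset_biUnion_of_mem (u := fun c => ball c R) hcC⟩
  · intro h
    refine ⟨{c | ball c R ⊆ Xᶜ},
      Subset.antisymm (fun y hy => ?_) (iUnion₂_subset fun c hc => hc)⟩
    obtain ⟨c, hyc, hcX⟩ := h y hy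
    exact mem_biUnion hcX hyc

theorem convex_iff_ballConvexity_infinite {n : ℕ} (X : Set (EuclideanSpace ℝ (Fin n)))
    (hX : IsClosed X)
    (hplane : ¬ ∃ (f : EuclideanSpace ℝ (Fin n) →L[ℝ] ℝ) (c : ℝ), f ≠ 0 ∧ ∀ x ∈ X, f x = c) :
    Convex ℝ X ↔ ∀ R > 0, ComplUnionBalls X R := by
  refine ⟨fun hconv R hR => complUnionBalls_iff.2 fun y hy =>
    hconv.exists_ball_subset_compl hX hy hR, fun hballs => ?_⟩
  rcases X.eq_empty_or_nonempty with rfl | hne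
  · exact convex_empty
  have hspan : affineSpan ℝ X = ⊤ := by
    by_contra h
    obtain ⟨a, ha⟩ := hne
    obtain ⟨f, hf, hfX⟩ := exists_ne_zero_forall_eq_of_affineSpan_ne_top ha h
    exact hplane ⟨f, f a, hf, hfX⟩
  exact hX.convex_of_forall_notMem_exists_le
    (interior_convexHull_nonempty_iff_affineSpan_eq_top.2 hspan) fun z hz =>
      exists_ne_zero_forall_le_of_forall_exists_ball hne fun R hR =>
        complUnionBalls_iff.1 (hballs R hR) z hz
end

section
/- If X ⊆ ℝⁿ is closed with finite ball-convexity bc(X), then for any r > 0, bc(e_r(X)) ≥ bc(X) + r. -/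
open Metric Set

/-- The ball-convexity of `X`, as an extended real: the supremum of radii `R > 0`
for which the complement of `X` is a union of open balls of radius `R`. -/
noncomputable def ballConvexity {n : ℕ} (X : Set (EuclideanSpace ℝ (Fin n))) : EReal :=
  sSup {x : EReal | ∃ R : ℝ, x = (R : EReal) ∧ 0 < R ∧ ComplUnionBalls X R}

/- `(e_r X)ᶜ` is the open `r`-thickening of `Xᶜ`, and in a normed space the
`r`-thickening of a union of open `R`-balls is the union of the concentric `(R + r)`-balls.
So every admissible radius `R` for `X` yields the admissible radius `R + r` for `e_r X`. -/

theorem thickening_biUnion_ball {E : Type*} [SeminormedAddCommGroup E] [NormedSpace ℝ E]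
    (C : Set E) {R r : ℝ} (hR : 0 < R) (hr : 0 < r) :
    thickening r (⋃ c ∈ C, ball c R) = ⋃ c ∈ C, ball c (R + r) := by
  simp only [thickening_iUnion, thickening_ball hr hR, add_comm r R]

theorem compl_eros {n : ℕ} {r : ℝ} (hr : 0 < r) (X : Set (EuclideanSpace ℝ (Fin n))) :
    (eros r X)ᶜ = thickening r Xᶜ := by
  ext x
  simp only [eros, mem_compl_iff, mem_ofPred_eq, not_and, not_forall, not_le,
    mem_thickening_iff, exists_prop]
  constructor
  · intro h
    by_cases hx : x ∈ X
    · exact h hx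
    · exact ⟨x, hx, by simpa using hr⟩
  · rintro ⟨y, hy, hxy⟩ _
    exact ⟨y, hy, hxy⟩

theorem ComplUnionBalls.eros {n : ℕ} {X : Set (EuclideanSpace ℝ (Fin n))} {R r : ℝ}
    (hR : 0 < R) (hr : 0 < r) (h : ComplUnionBalls X R) :
    ComplUnionBalls (eros r X) (R + r) := by
  obtain ⟨C, hC⟩ := h
  exact ⟨C, by rw [compl_eros hr, hC, thickening_biUnion_ball C hR hr]⟩

theorem le_ballConvexity {n : ℕ} {X : Set (EuclideanSpace ℝ (Fin n))} {R : ℝ}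
    (hR : 0 < R) (h : ComplUnionBalls X R) : (R : EReal) ≤ ballConvexity X :=
  le_sSup ⟨R, rfl, hR, h⟩

theorem exists_complUnionBalls_of_lt_ballConvexity {n : ℕ} {X : Set (EuclideanSpace ℝ (Fin n))}
    {a : EReal} (ha : a < ballConvexity X) :
    ∃ R : ℝ, a < R ∧ 0 < R ∧ ComplUnionBalls X R := by
  obtain ⟨_, ⟨R, rfl, hR, h⟩, haR⟩ := lt_sSup_iff.mp ha
  exact ⟨R, haR, hR, h⟩

theorem ballConvexity_erosion_general {n : ℕ} (X : Set (EuclideanSpace ℝ (Fin n)))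
    (r : ℝ) (hr : 0 < r) :
    ballConvexity X + (r : EReal) ≤ ballConvexity (eros r X) := by
  refine EReal.add_le_of_forall_lt fun a ha b hb => ?_
  obtain ⟨R, haR, hR, hX⟩ := exists_complUnionBalls_of_lt_ballConvexity ha
  calc a + b ≤ (R : EReal) + (r : EReal) := add_le_add haR.le hb.le
    _ = ((R + r : ℝ) : EReal) := (EReal.coe_add R r).symm
    _ ≤ ballConvexity (eros r X) := le_ballConvexity (by positivity) (hX.eros hR hr)

theorem ballConvexity_erosion {n : ℕ} (X : Set (EuclideanSpace ℝ (Fin n)))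
    (hX : IsClosed X) (hfin : ballConvexity X ≠ ⊤) (r : ℝ) (hr : 0 < r) :
    ballConvexity X + (r : EReal) ≤ ballConvexity (eros r X) :=
  ballConvexity_erosion_general X r hr
end

section
/- Suppose X ⊆ ℝⁿ is closed, does not lie in any affine hyperplane, and satisfies e_r(X) = σ(X) for some r > 0 and a similarity transformation σ whose scaling factor is at most 1. Then X is convex. -/
/-!
Call `X` `ρ`-ball-convex when every point outside `X` lies in an open `ρ`-ball missing `X`.
Eroding by `r` turns `ρ`-ball-convexity into `(ρ + r)`-ball-convexity, while pulling back along a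
similarity of ratio `α ≤ 1` divides the radius by `α`. Since `e_r(X) = σ(X)`, iterating shows
that `X` is `ρ`-ball-convex for arbitrarily large `ρ`. A point `q` strictly inside a triangle with
vertices in `X`, one of them the centre of an `r`-ball contained in `X`, cannot lie in a huge ball
missing `X`: the squared distances to the centre of that ball give a contradiction.
-/

open Metric Set

open AffineMap

/-- The supremum of the admissible `ρ` is the ball-convexity `bc(X)` of the paper. -/
def IsBallConvex {E : Type*} [PseudoMetricSpace E] (ρ : ℝ) (X : Set E) : Prop :=
  ∀ q ∉ X, ∃ c, q ∈ ball c ρ ∧ Disjoint (ball c ρ) X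

lemma IsBallConvex.of_image {E F : Type*} [MetricSpace E] [PseudoMetricSpace F] {σ : E → F}
    (hσ : Function.Surjective σ) {α : ℝ} (hα : 0 < α)
    (hsim : ∀ x y, dist (σ x) (σ y) = α * dist x y) {X : Set E} {ρ : ℝ}
    (h : IsBallConvex ρ (σ '' X)) : IsBallConvex (ρ / α) X := by
  have mem_ball_iff (x c : E) : σ x ∈ ball (σ c) ρ ↔ x ∈ ball c (ρ / α) := by
    rw [mem_ball, mem_ball, hsim, lt_div_iff₀ hα, mul_comm]
  intro q hq
  have hσq : σ q ∉ σ '' X := by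
    rintro ⟨w, hw, hwq⟩
    have : dist w q = 0 := by simpa [hwq, hα.ne'] using hsim w q
    exact hq (dist_eq_zero.1 this ▸ hw)
  obtain ⟨c', hqc', hdisj⟩ := h (σ q) hσq
  obtain ⟨c, rfl⟩ := hσ c'
  refine ⟨c, (mem_ball_iff q c).1 hqc', disjoint_left.2 fun w hw hwX => ?_⟩
  exact disjoint_left.1 hdisj ((mem_ball_iff w c).2 hw) (mem_image_of_mem σ hwX)

section Erosion

variable {n : ℕ} {r ρ : ℝ} {X : Set (EuclideanSpace ℝ (Fin n))}

lemma mem_eros_iff_ball_subset (hr : 0 < r) {x : EuclideanSpace ℝ (Fin n)} :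
    x ∈ eros r X ↔ ball x r ⊆ X := by
  refine ⟨fun hx y hy => ?_, fun hball => ⟨hball (mem_ball_self hr), fun y hy => ?_⟩⟩
  · by_contra hyX
    exact (mem_ball'.1 hy).not_ge (hx.2 y hyX)
  · by_contra hxy
    exact hy (hball (mem_ball'.2 (not_le.1 hxy)))

lemma exists_mem_ball_notMem_of_notMem_eros (hr : 0 < r) {q : EuclideanSpace ℝ (Fin n)}
    (hq : q ∉ eros r X) : ∃ y ∈ ball q r, y ∉ X :=
  not_subset.1 fun h => hq ((mem_eros_iff_ball_subset hr).2 h)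

lemma isBallConvex_eros (hr : 0 < r) : IsBallConvex r (eros r X) := by
  intro q hq
  obtain ⟨y, hyq, hyX⟩ := exists_mem_ball_notMem_of_notMem_eros hr hq
  refine ⟨y, mem_ball_comm.1 hyq, disjoint_left.2 fun w hwy hw => hyX ?_⟩
  exact (mem_eros_iff_ball_subset hr).1 hw (mem_ball_comm.1 hwy)

lemma IsBallConvex.eros (hr : 0 < r) (h : IsBallConvex ρ X) :
    IsBallConvex (ρ + r) (eros r X) := by
  intro q hq
  obtain ⟨y, hyq, hyX⟩ := exists_mem_ball_notMem_of_notMem_eros hr hq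
  obtain ⟨c, hyc, hdisj⟩ := h y hyX
  have hρ : 0 < ρ := pos_of_mem_ball hyc
  refine ⟨c, ?_, disjoint_left.2 fun w hwc hw => ?_⟩
  · calc dist q c ≤ dist q y + dist y c := dist_triangle q y c
      _ < ρ + r := by linarith [mem_ball'.1 hyq, mem_ball.1 hyc]
  · have hfar : ρ + r ≤ dist c w :=
      (disjoint_ball_ball_iff hρ hr).1 (hdisj.mono_right ((mem_eros_iff_ball_subset hr).1 hw))
    exact (mem_ball'.1 hwc).not_ge hfar

lemma exists_isBallConvex_ge_of_eros_eq_image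
    {σ : EuclideanSpace ℝ (Fin n) → EuclideanSpace ℝ (Fin n)} (hσ : Function.Surjective σ)
    {α : ℝ} (hα : 0 < α) (hα1 : α ≤ 1)
    (hsim : ∀ x y, dist (σ x) (σ y) = α * dist x y) (hr : 0 < r) (h : eros r X = σ '' X)
    (R : ℝ) : ∃ ρ, R ≤ ρ ∧ IsBallConvex ρ X := by
  have pull {ρ : ℝ} (hρ : IsBallConvex ρ (eros r X)) : IsBallConvex (ρ / α) X :=
    (h ▸ hρ).of_image hσ hα hsim
  have iterate (k : ℕ) : ∃ ρ, k * r ≤ ρ ∧ IsBallConvex ρ X := by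
    induction k with
    | zero => exact ⟨r / α, by rw [Nat.cast_zero, zero_mul]; positivity,
        pull (isBallConvex_eros hr)⟩
    | succ k ih =>
      obtain ⟨ρ, hkρ, hρ⟩ := ih
      have hk : ((k + 1 : ℕ) : ℝ) * r ≤ ρ + r := by push_cast; linarith
      exact ⟨(ρ + r) / α, hk.trans (le_div_self (hk.trans' (by positivity)) hα hα1),
        pull (hρ.eros hr)⟩
  obtain ⟨k, hk⟩ := exists_nat_ge (R / r)
  obtain ⟨ρ, hkρ, hρ⟩ := iterate k
  exact ⟨ρ, ((div_le_iff₀ hr).1 hk).trans hkρ, hρ⟩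

end Erosion

section InnerProductSpace

variable {E : Type*} [NormedAddCommGroup E] [InnerProductSpace ℝ E]

lemma norm_smul_add_smul_sq (a b : E) (t : ℝ) :
    ‖(1 - t) • a + t • b‖ ^ 2 = (1 - t) * ‖a‖ ^ 2 + t * ‖b‖ ^ 2 - t * (1 - t) * ‖a - b‖ ^ 2 := by
  rw [norm_add_sq_real, norm_sub_sq_real, norm_smul, norm_smul, real_inner_smul_left,
    real_inner_smul_right, Real.norm_eq_abs, Real.norm_eq_abs, mul_pow, mul_pow, sq_abs, sq_abs]
  ring

lemma dist_lineMap_sq (u v c : E) (t : ℝ) :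
    dist (lineMap u v t) c ^ 2 =
      (1 - t) * dist u c ^ 2 + t * dist v c ^ 2 - t * (1 - t) * dist u v ^ 2 := by
  have hsplit : lineMap u v t - c = (1 - t) • (u - c) + t • (v - c) := by
    rw [lineMap_apply_module]; module
  rw [dist_eq_norm, hsplit, norm_smul_add_smul_sq, dist_eq_norm, dist_eq_norm, dist_eq_norm,
    sub_sub_sub_cancel_right]

theorem IsClosed.convex_of_ball_subset_of_isBallConvex {X : Set E} (hX : IsClosed X) {p : E}
    {r : ℝ} (hr : 0 < r) (hp : ball p r ⊆ X) (hbc : ∀ R, ∃ ρ, R ≤ ρ ∧ IsBallConvex ρ X) :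
    Convex ℝ X := by
  refine convex_iff_segment_subset.2 fun x hx y hy => ?_
  rw [segment_eq_image_lineMap]
  rintro _ ⟨s, ⟨hs0, hs1⟩, rfl⟩
  by_contra hz
  set z := lineMap x y s
  obtain ⟨t, ⟨ht0, ht1⟩, hq⟩ : ∃ t ∈ Ioo (0 : ℝ) 1, lineMap z p t ∉ X := by
    have hcont : Filter.Tendsto (fun t : ℝ => lineMap z p t) (nhdsWithin 0 (Ioi 0)) (nhds z) :=
      (lineMap_continuous.tendsto' 0 z (by simp)).mono_left nhdsWithin_le_nhds
    exact Filter.nonempty_of_mem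
      (Filter.inter_mem (Ioo_mem_nhdsGT one_pos) (hcont (hX.isOpen_compl.mem_nhds hz)))
  obtain ⟨ρ, hρR, hρ⟩ := hbc ((dist x y ^ 2 + dist z p ^ 2) / (2 * t * r))
  obtain ⟨c, hqc, hdisj⟩ := hρ _ hq
  have hρ0 : 0 < ρ := pos_of_mem_ball hqc
  have hfar (w : E) (hw : w ∈ X) : ρ ≤ dist w c :=
    not_lt.1 fun hwc => disjoint_left.1 hdisj (mem_ball.2 hwc) hw
  have hpc : ρ + r ≤ dist p c := by
    rw [dist_comm]; exact (disjoint_ball_ball_iff hρ0 hr).1 (hdisj.mono_right hp)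
  have hsq {w : E} {a : ℝ} (ha : 0 ≤ a) (hw : a ≤ dist w c) : a ^ 2 ≤ dist w c ^ 2 :=
    pow_le_pow_left₀ ha hw 2
  have hzc : ρ ^ 2 - dist x y ^ 2 ≤ dist z c ^ 2 := by
    rw [dist_lineMap_sq x y c s]
    nlinarith [mul_nonneg (sub_nonneg.2 hs1) (sub_nonneg.2 (hsq hρ0.le (hfar x hx))),
      mul_nonneg hs0 (sub_nonneg.2 (hsq hρ0.le (hfar y hy))), sq_nonneg (dist x y),
      mul_nonneg (mul_nonneg hs0 hs0) (sq_nonneg (dist x y))]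
  -- the `r`-margin at `p` beats the bounded errors once `ρ` is large
  have hqc2 :
      ρ ^ 2 + 2 * t * ρ * r - dist x y ^ 2 - dist z p ^ 2 ≤ dist (lineMap z p t) c ^ 2 := by
    rw [dist_lineMap_sq z p c t]
    nlinarith [mul_nonneg (sub_nonneg.2 ht1.le) (sub_nonneg.2 hzc),
      mul_nonneg ht0.le (sub_nonneg.2 (hsq (by positivity) hpc)), sq_nonneg (dist z p),
      mul_nonneg (mul_nonneg ht0.le ht0.le) (sq_nonneg (dist z p)),
      mul_nonneg ht0.le (sq_nonneg (dist x y)), mul_nonneg ht0.le (sq_nonneg r)]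
  have hlarge : dist x y ^ 2 + dist z p ^ 2 ≤ 2 * t * ρ * r := by
    have := (div_le_iff₀ (by positivity : 0 < 2 * t * r)).1 hρR
    linarith
  have hqc' : dist (lineMap z p t) c ^ 2 < ρ ^ 2 :=
    pow_lt_pow_left₀ (mem_ball.1 hqc) dist_nonneg two_ne_zero
  linarith

end InnerProductSpace

theorem convex_of_resilient_nonexpanding_general {n : ℕ} (X : Set (EuclideanSpace ℝ (Fin n)))
    (hX : IsClosed X)
    (σ : EuclideanSpace ℝ (Fin n) → EuclideanSpace ℝ (Fin n))
    (hσ : Function.Surjective σ) (α : ℝ) (hα : 0 < α) (hα1 : α ≤ 1)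
    (hsim : ∀ x y, dist (σ x) (σ y) = α * dist x y)
    (r : ℝ) (hr : 0 < r) (h : eros r X = σ '' X) :
    Convex ℝ X := by
  rcases X.eq_empty_or_nonempty with rfl | ⟨x₀, hx₀⟩
  · exact convex_empty
  have hcentre : σ x₀ ∈ eros r X := h ▸ mem_image_of_mem σ hx₀
  exact hX.convex_of_ball_subset_of_isBallConvex hr ((mem_eros_iff_ball_subset hr).1 hcentre)
    (exists_isBallConvex_ge_of_eros_eq_image hσ hα hα1 hsim hr h)

theorem convex_of_resilient_nonexpanding {n : ℕ} (X : Set (EuclideanSpace ℝ (Fin n)))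
    (hX : IsClosed X)
    (hplane : ¬ ∃ (f : EuclideanSpace ℝ (Fin n) →L[ℝ] ℝ) (c : ℝ), f ≠ 0 ∧ ∀ x ∈ X, f x = c)
    (σ : EuclideanSpace ℝ (Fin n) → EuclideanSpace ℝ (Fin n))
    (hσ : Function.Surjective σ) (α : ℝ) (hα : 0 < α) (hα1 : α ≤ 1)
    (hsim : ∀ x y, dist (σ x) (σ y) = α * dist x y)
    (r : ℝ) (hr : 0 < r) (h : eros r X = σ '' X) :
    Convex ℝ X :=
  convex_of_resilient_nonexpanding_general X hX σ hσ α hα hα1 hsim r hr h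
end

section
/- Let X ⊆ ℝⁿ be a closed convex set with an inscribed ball of radius R centered at p, and let 0 < r < R. Then e_r(X) is similar to X; specifically e_r(X) is the image of X under the homothety centered at p with ratio (R − r)/R. -/
open Metric Set

/-- `x` is a regular point of `X`: a frontier point with a unique (unit-normal)
supporting half-space. -/
def IsRegularPt {n : ℕ} (X : Set (EuclideanSpace ℝ (Fin n))) (x : EuclideanSpace ℝ (Fin n)) :
    Prop :=
  x ∈ frontier X ∧ ∃! f : EuclideanSpace ℝ (Fin n) →L[ℝ] ℝ, ‖f‖ = 1 ∧ ∀ y ∈ X, f y ≤ f x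

/-- `{y | f y ≤ c}` (with `‖f‖ = 1`) is a regular supporting half-space of `X`. -/
def IsRegularSupport {n : ℕ} (X : Set (EuclideanSpace ℝ (Fin n)))
    (f : EuclideanSpace ℝ (Fin n) →L[ℝ] ℝ) (c : ℝ) : Prop :=
  ‖f‖ = 1 ∧ (∀ y ∈ X, f y ≤ c) ∧ ∃ x ∈ X, f x = c ∧ IsRegularPt X x

/-- The closed ball of radius `R` about `p` is inscribed in `X`. -/
def InscribedBall {n : ℕ} (X : Set (EuclideanSpace ℝ (Fin n)))
    (p : EuclideanSpace ℝ (Fin n)) (R : ℝ) : Prop :=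
  Metric.closedBall p R ⊆ X ∧
    ∀ f c, IsRegularSupport X f c → ∃ y ∈ Metric.closedBall p R, f y = c

/-!
A regular supporting half-space `{f ≤ c}` of `X` (with `‖f‖ = 1`) touches the inscribed ball,
so `c = f p + R`, and eroding by `r` moves it to `{f ≤ c - r}`, its image under the homothety
of centre `p` and ratio `(R - r) / R`. So `e_r(X)` lies in the homothetic image of `X` because
a closed convex body is the intersection of its regular supporting half-spaces. Conversely, by
convexity the ball of radius `r` about the image of `x ∈ X` lies in the convex hull of `x` and
the inscribed ball.

A point `v ∉ X` is separated by a regular half-space through the gauge `g` of `X` about `p`: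
`g` is Lipschitz, so by Rademacher's theorem it is differentiable at some `w` near `v`. At the
boundary point `w / g w` every supporting functional, scaled to touch `g` there, lies below `g`
and touches it at `w`, hence equals `g'(w)`; so this point is regular. As `g'(w) ≤ g` with
equality at `w`, `g'(w) v ≥ g w - g (w - v) > 1` once `w` is close to `v`.
-/

open Filter Topology

section Gauge

variable {E : Type*} [NormedAddCommGroup E] [NormedSpace ℝ E]

theorem LipschitzWith.dense_differentiableAt [FiniteDimensional ℝ E] {F : Type*}
    [NormedAddCommGroup F] [NormedSpace ℝ F] [FiniteDimensional ℝ F] {C : NNReal} {f : E → F}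
    (hf : LipschitzWith C f) : Dense {x | DifferentiableAt ℝ f x} :=
  let _ : MeasurableSpace E := borel E
  have _ : BorelSpace E := ⟨rfl⟩
  MeasureTheory.Measure.dense_of_ae
    (hf.ae_differentiableAt (μ := (Module.Basis.ofVectorSpace ℝ E).addHaar))

theorem eq_smul_fderiv_of_le_of_eq {f : E → ℝ} {ψ : E →L[ℝ] ℝ} {w : E} (c : ℝ)
    (hd : DifferentiableAt ℝ f w) (hle : ∀ v, ψ v ≤ c * f v) (heq : ψ w = c * f w) :
    ψ = c • fderiv ℝ f w := by
  have hmin : IsLocalMin (fun v => c * f v - ψ v) w :=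
    Eventually.of_forall fun v => by simpa [heq] using hle v
  exact (sub_eq_zero.1 (hmin.hasFDerivAt_eq_zero
    ((hd.hasFDerivAt.const_mul c).sub ψ.hasFDerivAt))).symm

variable {s : Set E} {w : E}

theorem fderiv_gauge_apply_le (hc : Convex ℝ s) (ha : Absorbent ℝ s)
    (hd : DifferentiableAt ℝ (gauge s) w) (v : E) : fderiv ℝ (gauge s) w v ≤ gauge s v := by
  refine le_of_tendsto (hd.hasFDerivAt.hasLineDerivAt v).tendsto_slope_zero_right ?_
  filter_upwards [self_mem_nhdsWithin] with t (ht : 0 < t)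
  have := gauge_add_le hc ha w (t • v)
  rw [gauge_smul_of_nonneg ht.le, smul_eq_mul] at this
  rw [smul_eq_mul, inv_mul_le_iff₀ ht]
  linarith

theorem fderiv_gauge_apply_self (hd : DifferentiableAt ℝ (gauge s) w) :
    fderiv ℝ (gauge s) w w = gauge s w := by
  refine tendsto_nhds_unique (hd.hasFDerivAt.hasLineDerivAt w).tendsto_slope_zero_right
    (tendsto_const_nhds.congr' ?_)
  filter_upwards [self_mem_nhdsWithin] with t (ht : 0 < t)
  have hw : w + t • w = (1 + t) • w := by module
  rw [hw, gauge_smul_of_nonneg (by positivity), smul_eq_mul, smul_eq_mul]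
  field_simp
  ring

theorem apply_le_mul_gauge (f : E →L[ℝ] ℝ) {c : ℝ} (ha : Absorbent ℝ s) (hc : 0 ≤ c)
    (hf : ∀ y ∈ s, f y ≤ c) (v : E) : f v ≤ c * gauge s v := by
  have hlim : Tendsto (c * ·) (𝓝[>] gauge s v) (𝓝 (c * gauge s v)) :=
    (continuous_const_mul c).continuousWithinAt
  refine ge_of_tendsto hlim ?_
  filter_upwards [self_mem_nhdsWithin] with t (ht : gauge s v < t)
  obtain ⟨b, hb, hbt, y, hy, rfl⟩ := exists_lt_of_gauge_lt ha ht
  calc f (b • y) = b * f y := by rw [map_smul, smul_eq_mul]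
    _ ≤ b * c := by gcongr; exact hf y hy
    _ ≤ c * t := by nlinarith

theorem exists_differentiableAt_gauge_lt_fderiv [FiniteDimensional ℝ E] (hc : Convex ℝ s)
    (hs : s ∈ 𝓝 0) {v : E} (hv : 1 < gauge s v) :
    ∃ w, DifferentiableAt ℝ (gauge s) w ∧ 0 < gauge s w ∧ 1 < fderiv ℝ (gauge s) w v := by
  have hg := continuous_gauge hc hs
  have hopen : IsOpen {w | 1 < gauge s w - gauge s (w - v)} :=
    isOpen_lt continuous_const (hg.sub (hg.comp (continuous_id.sub continuous_const)))
  obtain ⟨K, hK⟩ := hc.lipschitz_gauge hs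
  obtain ⟨w, (hd : DifferentiableAt ℝ (gauge s) w),
      (hwv : 1 < gauge s w - gauge s (w - v))⟩ :=
    hK.dense_differentiableAt.exists_mem_open hopen ⟨v, by simpa using hv⟩
  have ha : Absorbent ℝ s := absorbent_nhds_zero hs
  refine ⟨w, hd, by linarith [gauge_nonneg (s := s) (w - v)], ?_⟩
  calc 1 < gauge s w - gauge s (w - v) := hwv
    _ ≤ fderiv ℝ (gauge s) w w - fderiv ℝ (gauge s) w (w - v) := by
      rw [fderiv_gauge_apply_self hd]; linarith [fderiv_gauge_apply_le hc ha hd (w - v)]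
    _ = fderiv ℝ (gauge s) w v := by rw [map_sub]; ring

theorem eq_smul_fderiv_gauge_of_supports (ha : Absorbent ℝ s)
    (hd : DifferentiableAt ℝ (gauge s) w) (hw : 0 < gauge s w) {f : E →L[ℝ] ℝ}
    (hf : ∀ y ∈ s, f y ≤ f ((gauge s w)⁻¹ • w)) :
    f = f ((gauge s w)⁻¹ • w) • fderiv ℝ (gauge s) w := by
  have hz : 0 ≤ f ((gauge s w)⁻¹ • w) := by simpa using hf 0 ha.zero_mem
  refine eq_smul_fderiv_of_le_of_eq _ hd (apply_le_mul_gauge f ha hz hf) ?_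
  rw [map_smul, smul_eq_mul]
  field_simp

end Gauge

theorem ContinuousLinearMap.apply_le_add_of_mem_closedBall {F : Type*} [NormedAddCommGroup F]
    [NormedSpace ℝ F] {f : F →L[ℝ] ℝ} {p y : F} {R : ℝ} (hf : ‖f‖ = 1)
    (hy : y ∈ closedBall p R) : f y ≤ f p + R := by
  have := (Real.le_norm_self _).trans (f.le_opNorm (y - p))
  rw [hf, one_mul, ← dist_eq_norm, map_sub] at this
  linarith [mem_closedBall.1 hy]

section Support

variable {F : Type*} [NormedAddCommGroup F] [InnerProductSpace ℝ F] [CompleteSpace F]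
  {f : F →L[ℝ] ℝ} {X : Set F} {p : F} {R c : ℝ}

theorem ContinuousLinearMap.exists_norm_eq_one_apply_eq_one (hf : ‖f‖ = 1) :
    ∃ z, ‖z‖ = 1 ∧ f z = 1 := by
  set z := (InnerProductSpace.toDual ℝ F).symm f
  have hz : ‖z‖ = 1 := by simpa [z] using hf
  refine ⟨z, hz, ?_⟩
  rw [← InnerProductSpace.toDual_symm_apply, real_inner_self_eq_norm_sq, hz, one_pow]

theorem add_le_of_closedBall_subset (hf : ‖f‖ = 1) (hR : 0 ≤ R) (hball : closedBall p R ⊆ X)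
    (hX : ∀ y ∈ X, f y ≤ c) : f p + R ≤ c := by
  obtain ⟨z, hz, hfz⟩ := f.exists_norm_eq_one_apply_eq_one hf
  have hmem : p + R • z ∈ closedBall p R := by
    rw [mem_closedBall, dist_eq_norm, add_sub_cancel_left, norm_smul, hz, mul_one,
      Real.norm_of_nonneg hR]
  simpa [hfz] using hX _ (hball hmem)

end Support

theorem InscribedBall.eq_of_isRegularSupport {n : ℕ} {X : Set (EuclideanSpace ℝ (Fin n))}
    {p : EuclideanSpace ℝ (Fin n)} {R c : ℝ} {f : EuclideanSpace ℝ (Fin n) →L[ℝ] ℝ}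
    (hR : InscribedBall X p R) (hR0 : 0 ≤ R) (hf : IsRegularSupport X f c) : c = f p + R := by
  obtain ⟨y, hy, rfl⟩ := hR.2 f c hf
  exact le_antisymm (f.apply_le_add_of_mem_closedBall hf.1 hy)
    (add_le_of_closedBall_subset hf.1 hR0 hR.1 hf.2.1)

section Erosion

variable {n : ℕ} {X : Set (EuclideanSpace ℝ (Fin n))} {x : EuclideanSpace ℝ (Fin n)} {r : ℝ}

theorem mem_eros_iff : x ∈ eros r X ↔ x ∈ X ∧ ball x r ⊆ X :=
  and_congr_right fun _ =>
    ⟨fun h _ hy => by_contra fun hyX => (h _ hyX).not_gt (mem_ball'.1 hy),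
      fun h _ hy => not_lt.1 fun hlt => hy (h (mem_ball'.2 hlt))⟩

theorem closedBall_subset_of_mem_eros (hX : IsClosed X) (hr : r ≠ 0) (hx : x ∈ eros r X) :
    closedBall x r ⊆ X := by
  rw [← closure_ball x hr]
  exact closure_minimal (mem_eros_iff.1 hx).2 hX

end Erosion

theorem Convex.ball_add_smul_sub_subset {E : Type*} [NormedAddCommGroup E] [NormedSpace ℝ E]
    {X : Set E} {x p : E} {R k : ℝ} (hX : Convex ℝ X) (hx : x ∈ X) (hball : ball p R ⊆ X)
    (hk₀ : 0 ≤ k) (hk₁ : k < 1) : ball (p + k • (x - p)) ((1 - k) * R) ⊆ X := by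
  intro w hw
  have hk : 0 < 1 - k := by linarith
  set q := p + (1 - k)⁻¹ • (w - (p + k • (x - p)))
  have hq : q ∈ ball p R := by
    rw [mem_ball, dist_eq_norm, add_sub_cancel_left, norm_smul, Real.norm_of_nonneg
      (inv_nonneg.2 hk.le), ← dist_eq_norm, inv_mul_lt_iff₀ hk]
    exact hw
  convert hX hx (hball hq) hk₀ hk.le (by ring) using 1
  simp only [q]
  match_scalars <;> field_simp <;> ring

section Regular

variable {n : ℕ} {K : Set (EuclideanSpace ℝ (Fin n))} {w : EuclideanSpace ℝ (Fin n)}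

theorem isRegularSupport_fderiv_gauge (hK : Convex ℝ K) (hKc : IsClosed K) (hK₀ : K ∈ 𝓝 0)
    (hd : DifferentiableAt ℝ (gauge K) w) (hw : 0 < gauge K w) :
    IsRegularSupport K (‖fderiv ℝ (gauge K) w‖⁻¹ • fderiv ℝ (gauge K) w)
      ‖fderiv ℝ (gauge K) w‖⁻¹ := by
  set φ := fderiv ℝ (gauge K) w
  set z := (gauge K w)⁻¹ • w
  have ha : Absorbent ℝ K := absorbent_nhds_zero hK₀
  have hgz : gauge K z = 1 := by
    rw [gauge_smul_of_nonneg (inv_nonneg.2 hw.le), smul_eq_mul, inv_mul_cancel₀ hw.ne']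
  have hφz : φ z = 1 := by
    rw [map_smul, fderiv_gauge_apply_self hd, smul_eq_mul, inv_mul_cancel₀ hw.ne']
  have hφ : φ ≠ 0 := fun h => by simp [h] at hφz
  have hφK : ∀ y ∈ K, φ y ≤ 1 := fun y hy =>
    (fderiv_gauge_apply_le hK ha hd y).trans (gauge_le_one_of_mem hy)
  have hzK : z ∈ K := by
    rw [← hKc.closure_eq, ← gauge_le_one_iff_mem_closure hK hK₀, hgz]
  have hunit : ‖‖φ‖⁻¹ • φ‖ = 1 := norm_smul_inv_norm hφ
  have hsupp : ∀ y ∈ K, (‖φ‖⁻¹ • φ) y ≤ ‖φ‖⁻¹ := fun y hy => by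
    simpa using mul_le_of_le_one_right (inv_nonneg.2 (norm_nonneg φ)) (hφK y hy)
  refine ⟨hunit, hsupp, z, hzK, by simp [hφz], (gauge_eq_one_iff_mem_frontier hK hK₀).1 hgz,
    ‖φ‖⁻¹ • φ, ⟨hunit, by simpa [hφz] using hsupp⟩, ?_⟩
  rintro f ⟨hf₁, hfK⟩
  have hfφ : f = f z • φ := eq_smul_fderiv_gauge_of_supports ha hd hw hfK
  have hfz : f z = ‖φ‖⁻¹ := by
    rw [hfφ, norm_smul, Real.norm_of_nonneg (by simpa using hfK 0 ha.zero_mem)] at hf₁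
    exact eq_inv_of_mul_eq_one_left hf₁
  rw [hfφ, hfz]

theorem exists_isRegularSupport_lt (hK : Convex ℝ K) (hKc : IsClosed K) (hK₀ : K ∈ 𝓝 0)
    {v : EuclideanSpace ℝ (Fin n)} (hv : v ∉ K) :
    ∃ f c, IsRegularSupport K f c ∧ c < f v := by
  have hv₁ : 1 < gauge K v := by
    contrapose! hv
    rwa [← hKc.closure_eq, ← gauge_le_one_iff_mem_closure hK hK₀]
  obtain ⟨w, hd, hw, hφv⟩ := exists_differentiableAt_gauge_lt_fderiv hK hK₀ hv₁
  refine ⟨_, _, isRegularSupport_fderiv_gauge hK hKc hK₀ hd hw, ?_⟩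
  have hφ : 0 < ‖fderiv ℝ (gauge K) w‖⁻¹ :=
    inv_pos.2 (norm_pos_iff.2 fun h => by simp [h] at hφv; linarith)
  simpa using mul_lt_mul_of_pos_left hφv hφ

end Regular

section Translate

variable {n : ℕ} {X : Set (EuclideanSpace ℝ (Fin n))} {p : EuclideanSpace ℝ (Fin n)}

theorem IsRegularPt.of_preimage_add {x : EuclideanSpace ℝ (Fin n)}
    (h : IsRegularPt ((p + ·) ⁻¹' X) x) : IsRegularPt X (p + x) := by
  have hsupp : ∀ f : EuclideanSpace ℝ (Fin n) →L[ℝ] ℝ,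
      (∀ y ∈ X, f y ≤ f (p + x)) ↔ ∀ y ∈ (p + ·) ⁻¹' X, f y ≤ f x := fun f => by
    refine ⟨fun hf y hy => by simpa using hf _ hy, fun hf y hy => ?_⟩
    have := hf (y - p) (by simpa using hy)
    rw [map_add]; rw [map_sub] at this; linarith
  exact ⟨((Homeomorph.addLeft p).preimage_frontier X).ge h.1, by simpa only [hsupp] using h.2⟩

theorem IsRegularSupport.of_preimage_add {f : EuclideanSpace ℝ (Fin n) →L[ℝ] ℝ} {c : ℝ}
    (h : IsRegularSupport ((p + ·) ⁻¹' X) f c) : IsRegularSupport X f (f p + c) := by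
  obtain ⟨hf₁, hf, x, hx, rfl, hreg⟩ := h
  refine ⟨hf₁, fun y hy => ?_, p + x, hx, map_add f p x, hreg.of_preimage_add⟩
  have := hf (y - p) (by simpa using hy)
  rw [map_sub] at this; linarith

theorem mem_of_forall_isRegularSupport_le (hX : IsClosed X) (hconv : Convex ℝ X)
    (hp : p ∈ interior X) {u : EuclideanSpace ℝ (Fin n)}
    (h : ∀ f c, IsRegularSupport X f c → f u ≤ c) : u ∈ X := by
  by_contra hu
  have hK₀ : (p + ·) ⁻¹' X ∈ 𝓝 0 :=
    (continuous_const_add p).continuousAt.preimage_mem_nhds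
      (by simpa using mem_interior_iff_mem_nhds.1 hp)
  obtain ⟨f, c, hfc, hlt⟩ := exists_isRegularSupport_lt (hconv.translate_preimage_right p)
    (hX.preimage (continuous_const_add p)) hK₀ (v := u - p) (by simpa using hu)
  have := h f _ hfc.of_preimage_add
  rw [map_sub] at hlt; linarith

end Translate

theorem erosion_of_inscribed_is_homothety {n : ℕ} (X : Set (EuclideanSpace ℝ (Fin n)))
    (hX : IsClosed X) (hconv : Convex ℝ X)
    (p : EuclideanSpace ℝ (Fin n)) (R r : ℝ) (hR : InscribedBall X p R)
    (hr0 : 0 < r) (hrR : r < R) :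
    eros r X = (fun x => p + ((R - r) / R) • (x - p)) '' X := by
  have hR0 : 0 < R := hr0.trans hrR
  have hRr : 0 < R - r := sub_pos.2 hrR
  have hp : p ∈ interior X :=
    mem_interior_iff_mem_nhds.2 (mem_of_superset (closedBall_mem_nhds p hR0) hR.1)
  ext x
  constructor
  · intro hx
    have hxball := closedBall_subset_of_mem_eros hX hr0.ne' hx
    refine ⟨p + (R / (R - r)) • (x - p), mem_of_forall_isRegularSupport_le hX hconv hp
      fun f c hfc => ?_, ?_⟩
    · have hc : c = f p + R := hR.eq_of_isRegularSupport hR0.le hfc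
      have hfx : f x + r ≤ c := add_le_of_closedBall_subset hfc.1 hr0.le hxball hfc.2.1
      have hfx' : f x - f p ≤ R - r := by linarith
      calc f (p + (R / (R - r)) • (x - p)) = f p + R / (R - r) * (f x - f p) := by
            rw [map_add, map_smul, map_sub, smul_eq_mul]
        _ ≤ f p + R / (R - r) * (R - r) :=
          add_le_add_right (mul_le_mul_of_nonneg_left hfx' (div_pos hR0 hRr).le) _
        _ = c := by rw [div_mul_cancel₀ _ hRr.ne', hc]
    · have hk : (R - r) / R * (R / (R - r)) = 1 := by field_simp
      simp only [add_sub_cancel_left, smul_smul, hk, one_smul, add_sub_cancel]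
  · rintro ⟨y, hy, rfl⟩
    have hball := hconv.ball_add_smul_sub_subset hy (ball_subset_closedBall.trans hR.1)
      (div_nonneg hRr.le hR0.le) ((div_lt_one hR0).2 (by linarith))
    rw [show (1 - (R - r) / R) * R = r by field_simp; ring] at hball
    exact mem_eros_iff.2 ⟨hball (mem_ball_self hr0), hball⟩
end

section
/- If a convex body X ⊆ ℝⁿ satisfies e_r(X) = σ(X) for some r > 0 and a distance-increasing similarity transformation σ (scaling factor α > 1) with fixed point p, then p lies outside every supporting half-space of X. -/
open Metric Set

theorem Isometry.dist_iterate_eq {Y : Type*} [PseudoMetricSpace Y] {T : Y → Y}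
    (hT : Isometry T) (m : ℕ) (x y : Y) : dist (T^[m] x) (T^[m] y) = dist x y := by
  induction m with
  | zero => rfl
  | succ m ih => rw [Function.iterate_succ_apply', Function.iterate_succ_apply', hT.dist_eq, ih]

theorem Isometry.exists_iterate_dist_lt {Y : Type*} [PseudoMetricSpace Y] {T : Y → Y}
    (hT : Isometry T) {K : Set Y} (hK : IsCompact K) {x : Y} (hx : ∀ m, T^[m] x ∈ K)
    {ε : ℝ} (hε : 0 < ε) (N : ℕ) : ∃ k, N ≤ k ∧ dist (T^[k] x) x < ε := by
  obtain ⟨a, -, φ, hφ, hlim⟩ := hK.tendsto_subseq hx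
  obtain ⟨M, hM⟩ := Metric.cauchySeq_iff'.mp hlim.cauchySeq ε hε
  have hM_le : M ≤ φ M + N := (hφ.id_le M).trans (Nat.le_add_right _ _)
  have hgap : φ M + N ≤ φ (φ M + N) := hφ.id_le _
  refine ⟨φ (φ M + N) - φ M, by omega, ?_⟩
  have h := hM _ hM_le
  simp only [Function.comp_apply] at h
  rwa [← Nat.add_sub_of_le (hgap.trans' (Nat.le_add_right _ _)), Function.iterate_add_apply,
    hT.dist_iterate_eq] at h

/-- Mazur–Ulam applied to the isometry `v ↦ α⁻¹ • (σ (p + v) - p)`. -/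
theorem exists_linearIsometryEquiv_of_dist_eq_mul {E : Type*} [NormedAddCommGroup E]
    [NormedSpace ℝ E] {σ : E → E} (hσ : Function.Surjective σ) {α : ℝ} (hα : 0 < α)
    (hsim : ∀ x y, dist (σ x) (σ y) = α * dist x y) {p : E} (hp : σ p = p) :
    ∃ A : E ≃ₗᵢ[ℝ] E, ∀ x, σ x = p + α • A (x - p) := by
  set τ : E → E := fun v => α⁻¹ • (σ (p + v) - p)
  have hτ : Isometry τ := Isometry.of_dist_eq fun v w => by
    rw [dist_smul₀, dist_sub_right, hsim, dist_add_left, Real.norm_of_nonneg (inv_pos.2 hα).le,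
      inv_mul_cancel_left₀ hα.ne']
  have hτ_surj : Function.Surjective τ := fun w => by
    obtain ⟨x, hx⟩ := hσ (p + α • w)
    exact ⟨x - p, by simp only [τ, add_sub_cancel, hx, add_sub_cancel_left, inv_smul_smul₀ hα.ne']⟩
  let T : E ≃ᵢ E := IsometryEquiv.mk' τ (Function.surjInv hτ_surj)
    (Function.surjInv_eq hτ_surj) hτ
  have hT0 : T 0 = 0 := by
    change α⁻¹ • (σ (p + 0) - p) = 0
    rw [add_zero, hp, sub_self, smul_zero]
  refine ⟨T.toRealLinearIsometryEquivOfMapZero hT0, fun x => ?_⟩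
  change σ x = p + α • α⁻¹ • (σ (p + (x - p)) - p)
  rw [add_sub_cancel, smul_inv_smul₀ hα.ne', add_sub_cancel]

theorem apply_add_mul_norm_le_of_mem_eros {n : ℕ} {X : Set (EuclideanSpace ℝ (Fin n))} {r : ℝ}
    (hr : 0 < r) {f : EuclideanSpace ℝ (Fin n) →L[ℝ] ℝ} {c : ℝ} (hsupp : ∀ y ∈ X, f y ≤ c)
    {z : EuclideanSpace ℝ (Fin n)} (hz : z ∈ eros r X) : f z + r * ‖f‖ ≤ c := by
  have hball : ∀ v, ‖v‖ < 1 → f z + r * f v ≤ c := fun v hv => by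
    have hzv : z + r • v ∈ X := by
      by_contra hout
      have := hz.2 _ hout
      rw [dist_self_add_right, norm_smul, Real.norm_of_nonneg hr.le] at this
      nlinarith
    simpa using hsupp _ hzv
  by_contra! hlt
  obtain ⟨v, hv, hfv⟩ := f.exists_lt_apply_of_lt_opNorm (r := (c - f z) / r)
    (by rw [div_lt_iff₀ hr]; linarith)
  rw [Real.norm_eq_abs, div_lt_iff₀ hr] at hfv
  have hv_neg := hball (-v) (by rwa [norm_neg])
  rw [map_neg] at hv_neg
  cases abs_cases (f v) <;> nlinarith [hball v hv]

section EquivariantErosion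

variable {n : ℕ} {X : Set (EuclideanSpace ℝ (Fin n))}
  {σ : EuclideanSpace ℝ (Fin n) → EuclideanSpace ℝ (Fin n)} {α r : ℝ} {p : EuclideanSpace ℝ (Fin n)}
  {A : EuclideanSpace ℝ (Fin n) ≃ₗᵢ[ℝ] EuclideanSpace ℝ (Fin n)}

theorem mul_apply_add_mul_norm_le_of_eros_eq_image (hσA : ∀ x, σ x = p + α • A (x - p))
    (hr : 0 < r) (h : eros r X = σ '' X) {u : EuclideanSpace ℝ (Fin n) →L[ℝ] ℝ} {d : ℝ}
    (hu : ∀ x ∈ X, u (x - p) ≤ d) {x : EuclideanSpace ℝ (Fin n)} (hx : x ∈ X) :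
    α * u (A (x - p)) + r * ‖u‖ ≤ d := by
  have hσx : σ x ∈ eros r X := h ▸ mem_image_of_mem σ hx
  have hsupp : ∀ y ∈ X, u y ≤ u p + d := fun y hy => by
    have := hu y hy
    rw [map_sub] at this
    linarith
  have := apply_add_mul_norm_le_of_mem_eros hr hsupp hσx
  rw [hσA, map_add, map_smul, smul_eq_mul] at this
  linarith

/-- `-R` is the fixed point of the recursion `d ↦ (d - r * ‖u‖) / α` on support bounds
given by the previous lemma. -/
theorem pow_mul_apply_iterate_add_le_of_eros_eq_image (hσA : ∀ x, σ x = p + α • A (x - p))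
    (hr : 0 < r) (h : eros r X = σ '' X) (hα : 0 < α) {R : ℝ} (k : ℕ)
    {u : EuclideanSpace ℝ (Fin n) →L[ℝ] ℝ} (hR : (α - 1) * R = r * ‖u‖) {d : ℝ}
    (hu : ∀ x ∈ X, u (x - p) ≤ d) {x : EuclideanSpace ℝ (Fin n)} (hx : x ∈ X) :
    α ^ k * (u ((⇑A)^[k] (x - p)) + R) ≤ d + R := by
  induction k generalizing u d with
  | zero => simpa using hu x hx
  | succ k ih =>
    have hu' : ∀ y ∈ X, u.comp (A : EuclideanSpace ℝ (Fin n) →L[ℝ] EuclideanSpace ℝ (Fin n))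
        (y - p) ≤ (d - r * ‖u‖) / α := fun y hy => by
      rw [le_div_iff₀ hα]
      have := mul_apply_add_mul_norm_le_of_eros_eq_image hσA hr h hu hy
      change u (A (y - p)) * α ≤ d - r * ‖u‖
      linarith
    have hk := ih (by rwa [ContinuousLinearMap.opNorm_comp_linearIsometryEquiv]) hu'
    change α ^ k * (u (A ((⇑A)^[k] (x - p))) + R) ≤ _ at hk
    rw [Function.iterate_succ_apply']
    calc α ^ (k + 1) * (u (A ((⇑A)^[k] (x - p))) + R)
        = α * (α ^ k * (u (A ((⇑A)^[k] (x - p))) + R)) := by ring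
      _ ≤ α * ((d - r * ‖u‖) / α + R) := by gcongr
      _ = d + R := by field_simp; linarith

end EquivariantErosion

theorem fixed_point_outside_supporting_halfspaces_general {n : ℕ}
    (X : Set (EuclideanSpace ℝ (Fin n)))
    (σ : EuclideanSpace ℝ (Fin n) → EuclideanSpace ℝ (Fin n))
    (hσ : Function.Surjective σ) (α : ℝ) (hα : 1 < α)
    (hsim : ∀ x y, dist (σ x) (σ y) = α * dist x y)
    (r : ℝ) (hr : 0 < r) (h : eros r X = σ '' X)
    (p : EuclideanSpace ℝ (Fin n)) (hp : σ p = p)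
    (f : EuclideanSpace ℝ (Fin n) →L[ℝ] ℝ) (c : ℝ) (hf : ‖f‖ = 1)
    (hsupp : ∀ y ∈ X, f y ≤ c) (htouch : ∃ x ∈ X, f x = c) :
    c < f p := by
  obtain ⟨x₀, hx₀, hfx₀⟩ := htouch
  obtain ⟨A, hA⟩ := exists_linearIsometryEquiv_of_dist_eq_mul hσ (by linarith) hsim hp
  set v := x₀ - p
  set R := r / (α - 1)
  have hR : (α - 1) * R = r * ‖f‖ := by rw [hf, mul_one, mul_div_cancel₀ _ (by linarith)]
  have hbound (k : ℕ) : α ^ k * (f ((⇑A)^[k] v) + R) ≤ c - f p + R :=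
    pow_mul_apply_iterate_add_le_of_eros_eq_image hA hr h (by linarith) k hR
      (fun x hx => by linarith [map_sub f x p, hsupp x hx]) hx₀
  suffices c - f p + R ≤ 0 by linarith [div_pos hr (sub_pos.2 hα)]
  by_contra! hδ
  obtain ⟨N, hN⟩ := pow_unbounded_of_one_lt 2 hα
  have horbit (m : ℕ) : (⇑A)^[m] v ∈ sphere 0 ‖v‖ := by
    simpa [Function.iterate_fixed (map_zero A)] using A.isometry.dist_iterate_eq m v 0
  obtain ⟨k, hkN, hk⟩ :=
    A.isometry.exists_iterate_dist_lt (isCompact_sphere 0 ‖v‖) horbit (half_pos hδ) N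
  have hlip := f.le_opNorm ((⇑A)^[k] v - v)
  rw [hf, one_mul, ← dist_eq_norm, map_sub, Real.norm_eq_abs] at hlip
  have hfv : f v = c - f p := by rw [map_sub, hfx₀]
  have hαk : 2 < α ^ k := hN.trans_le (pow_le_pow_right₀ hα.le hkN)
  nlinarith [hbound k, abs_le.1 hlip]

theorem fixed_point_outside_supporting_halfspaces {n : ℕ}
    (X : Set (EuclideanSpace ℝ (Fin n))) (hX : IsClosed X) (hconv : Convex ℝ X)
    (σ : EuclideanSpace ℝ (Fin n) → EuclideanSpace ℝ (Fin n))
    (hσ : Function.Surjective σ) (α : ℝ) (hα : 1 < α)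
    (hsim : ∀ x y, dist (σ x) (σ y) = α * dist x y)
    (r : ℝ) (hr : 0 < r) (h : eros r X = σ '' X)
    (p : EuclideanSpace ℝ (Fin n)) (hp : σ p = p)
    (f : EuclideanSpace ℝ (Fin n) →L[ℝ] ℝ) (c : ℝ) (hf : ‖f‖ = 1)
    (hsupp : ∀ y ∈ X, f y ≤ c) (htouch : ∃ x ∈ X, f x = c) :
    c < f p :=
  fixed_point_outside_supporting_halfspaces_general X σ hσ α hα hsim r hr h p hp f c hf hsupp htouch
end

section
/- Let X be a subset of a complete metric space (or ℝⁿ) satisfying e_r(X) = σ(X) for some r > 0 and a similarity transformation σ with scaling factor α > 1. Define W = ⋃_{k ≥ 1} σ^{-k}(X). Then W is scale-invariant under σ (σ(W) = W) and X = e_{r/(α−1)}(W). -/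
open Metric Set

/-! Write `Cₖ = σ^{-k}(Xᶜ)`, so that `Wᶜ = ⋂ Cₖ`. As `σ⁻¹` scales distances by `1 / α`, the
hypothesis reads `Cₖ = thickening (r / α^(k+1)) Cₖ₊₁`. In a normed space thickenings add up, so
`C₀` is the thickening of `Cₖ₊₁` by the partial sums of `∑ r / α^(k+1) = r / (α - 1)`; passing to
the limit (by a Cauchy-sequence argument for `⊆`) gives `Xᶜ = thickening (r / (α - 1)) Wᶜ`, that
is, `X` is the erosion of `W`. The invariance `σ(W) = W` only needs `σ(X) ⊆ X` and surjectivity. -/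

section Similarity

variable {P Q : Type*} [PseudoMetricSpace P] [PseudoMetricSpace Q]

theorem dist_iterate_eq_pow_mul {f : P → P} {c : ℝ} (hf : ∀ x y, dist (f x) (f y) = c * dist x y)
    (k : ℕ) (x y : P) : dist (f^[k] x) (f^[k] y) = c ^ k * dist x y := by
  induction k generalizing x y with
  | zero => simp
  | succ k ih => rw [Function.iterate_succ_apply, Function.iterate_succ_apply, ih, hf, pow_succ,
      mul_assoc]

theorem injective_of_dist_eq_mul_s18 {M : Type*} [MetricSpace M] {f : M → Q} {c : ℝ} (hc : c ≠ 0)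
    (hf : ∀ x y, dist (f x) (f y) = c * dist x y) : Function.Injective f := fun x y hxy =>
  dist_eq_zero.1 <| (mul_eq_zero.1 (by rw [← hf, hxy, dist_self])).resolve_left hc

theorem preimage_thickening_of_dist_eq_mul {f : P → Q} {c : ℝ} (hsurj : Function.Surjective f)
    (hc : 0 < c) (hf : ∀ x y, dist (f x) (f y) = c * dist x y) (δ : ℝ) (A : Set Q) :
    f ⁻¹' thickening δ A = thickening (δ / c) (f ⁻¹' A) := by
  ext x
  simp only [mem_preimage, mem_thickening_iff, lt_div_iff₀ hc]
  constructor
  · rintro ⟨a, ha, hxa⟩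
    obtain ⟨y, rfl⟩ := hsurj a
    exact ⟨y, ha, by rwa [mul_comm, ← hf]⟩
  · rintro ⟨y, hy, hxy⟩
    exact ⟨f y, hy, by rwa [hf, mul_comm]⟩

end Similarity

theorem image_iUnion_preimage_iterate_succ {α : Type*} {f : α → α} {s : Set α}
    (hsurj : Function.Surjective f) (hs : MapsTo f s s) :
    f '' ⋃ k : ℕ, f^[k + 1] ⁻¹' s = ⋃ k : ℕ, f^[k + 1] ⁻¹' s := by
  have hmono : Monotone fun k => f^[k] ⁻¹' s := monotone_nat_of_le_succ fun k => by
    rw [Function.iterate_succ', preimage_comp]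
    exact preimage_mono hs
  simp_rw [image_iUnion, Function.iterate_succ, preimage_comp, image_preimage_eq _ hsurj]
  exact (hmono.iUnion_nat_add 1).symm

section Thickening

theorem antitone_of_eq_thickening {E : Type*} [PseudoMetricSpace E] {C : ℕ → Set E} {ε : ℕ → ℝ}
    (hε : ∀ k, 0 < ε k) (hC : ∀ k, C k = thickening (ε k) (C (k + 1))) : Antitone C :=
  antitone_nat_of_succ_le fun k => (self_subset_thickening (hε k) _).trans (hC k).ge

theorem exists_mem_iInter_closure_dist_lt_tsum {E : Type*} [PseudoMetricSpace E] [CompleteSpace E]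
    {C : ℕ → Set E} {ε : ℕ → ℝ} (hanti : Antitone C) (hε : Summable ε)
    (hC : ∀ k, C k ⊆ thickening (ε k) (C (k + 1))) {x : E} (hx : x ∈ C 0) :
    ∃ y ∈ ⋂ k, closure (C k), dist x y < ∑' k, ε k := by
  have hstep : ∀ k, ∀ u ∈ C k, ∃ v ∈ C (k + 1), dist u v < ε k :=
    fun k _ hu => mem_thickening_iff.1 (hC k hu)
  choose! next hnext hdist using hstep
  let u : ℕ → E := fun k => Nat.rec x (fun k v => next k v) k
  have hu : ∀ k, u k ∈ C k := fun k => by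
    induction k with
    | zero => exact hx
    | succ k ih => exact hnext k _ ih
  have hud : ∀ k, dist (u k) (u (k + 1)) < ε k := fun k => hdist k _ (hu k)
  obtain ⟨y, hy⟩ :=
    cauchySeq_tendsto_of_complete (cauchySeq_of_dist_le_of_summable ε (fun k => (hud k).le) hε)
  refine ⟨y, mem_iInter.2 fun k => ?_, ?_⟩
  · exact mem_closure_of_tendsto hy (Filter.eventually_atTop.2 ⟨k, fun m hm => hanti hm (hu m)⟩)
  · have htail := dist_le_tsum_of_dist_le_of_tendsto ε (fun k => (hud k).le) hε hy 1
    simp_rw [add_comm 1] at htail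
    calc dist x y ≤ dist (u 0) (u 1) + dist (u 1) y := dist_triangle _ _ _
      _ < ε 0 + ∑' k, ε (k + 1) := add_lt_add_of_lt_of_le (hud 0) htail
      _ = ∑' k, ε k := hε.tsum_eq_zero_add.symm

variable {E : Type*} [SeminormedAddCommGroup E] [NormedSpace ℝ E] {C : ℕ → Set E} {ε : ℕ → ℝ}

theorem thickening_sum_range_succ_subset (hε : ∀ k, 0 < ε k)
    (hC : ∀ k, thickening (ε k) (C (k + 1)) ⊆ C k) (k : ℕ) :
    thickening (∑ i ∈ Finset.range (k + 1), ε i) (C (k + 1)) ⊆ C 0 := by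
  induction k with
  | zero => simpa using hC 0
  | succ k ih =>
    rw [Finset.sum_range_succ,
      ← thickening_thickening (Finset.sum_pos (fun i _ => hε i) Finset.nonempty_range_add_one)
        (hε _)]
    exact (thickening_subset_of_subset _ (hC (k + 1))).trans ih

theorem eq_thickening_tsum_iInter [CompleteSpace E] (hε : ∀ k, 0 < ε k) (hsum : Summable ε)
    (hC : ∀ k, C k = thickening (ε k) (C (k + 1))) :
    C 0 = thickening (∑' k, ε k) (⋂ k, C k) := by
  apply Subset.antisymm
  · intro x hx
    obtain ⟨y, hy, hxy⟩ := exists_mem_iInter_closure_dist_lt_tsum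
      (antitone_of_eq_thickening hε hC) hsum (fun k => (hC k).le) hx
    refine mem_thickening_iff.2 ⟨y, mem_iInter.2 fun k => ?_, hxy⟩
    rw [hC k]
    exact closure_subset_thickening (hε k) _ (mem_iInter.1 hy (k + 1))
  · intro x hx
    obtain ⟨y, hy, hxy⟩ := mem_thickening_iff.1 hx
    have hpartial := hsum.hasSum.tendsto_sum_nat.comp (Filter.tendsto_add_atTop_nat 1)
    obtain ⟨k, hk⟩ := (hpartial.eventually (lt_mem_nhds hxy)).exists
    exact thickening_sum_range_succ_subset hε (fun k => (hC k).ge) k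
      (mem_thickening_iff.2 ⟨y, mem_iInter.1 hy _, hk⟩)

end Thickening

theorem hasSum_div_pow_succ {α : ℝ} (hα : 1 < α) (r : ℝ) :
    HasSum (fun k : ℕ => r / α ^ (k + 1)) (r / (α - 1)) := by
  have hα0 : 0 < α := by linarith
  have hfun : (fun k : ℕ => r / α ^ (k + 1)) = fun k => r / α * α⁻¹ ^ k := by
    funext k
    rw [inv_pow, pow_succ]
    field_simp
  have hsum : r / (α - 1) = r / α * (1 - α⁻¹)⁻¹ := by
    field_simp
  rw [hfun, hsum]
  exact (hasSum_geometric_of_lt_one (inv_nonneg.2 hα0.le) (inv_lt_one_of_one_lt₀ hα)).mul_left _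

theorem eros_eq_compl_thickening {n : ℕ} {r : ℝ} (hr : 0 < r) (X : Set (EuclideanSpace ℝ (Fin n))) :
    eros r X = (thickening r Xᶜ)ᶜ := by
  ext x
  simp only [eros, mem_ofPred_eq, mem_compl_iff, mem_thickening_iff, not_exists, not_and, not_lt]
  refine ⟨fun hx => hx.2, fun hx => ⟨by_contra fun hxX => ?_, hx⟩⟩
  linarith [hx x hxX, dist_self x]

theorem preimage_iterate_compl_eq_thickening {n : ℕ} {X : Set (EuclideanSpace ℝ (Fin n))}
    {σ : EuclideanSpace ℝ (Fin n) → EuclideanSpace ℝ (Fin n)} (hσ : Function.Surjective σ)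
    {α : ℝ} (hα : 0 < α) (hsim : ∀ x y, dist (σ x) (σ y) = α * dist x y) {r : ℝ} (hr : 0 < r)
    (h : eros r X = σ '' X) (k : ℕ) :
    σ^[k] ⁻¹' Xᶜ = thickening (r / α ^ (k + 1)) (σ^[k + 1] ⁻¹' Xᶜ) := by
  have hXc : σ ⁻¹' thickening r Xᶜ = Xᶜ := by
    rw [← compl_compl (thickening r Xᶜ), ← eros_eq_compl_thickening hr, h, preimage_compl,
      preimage_image_eq _ (injective_of_dist_eq_mul_s18 hα.ne' hsim)]
  calc σ^[k] ⁻¹' Xᶜ = σ^[k + 1] ⁻¹' thickening r Xᶜ := by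
        rw [Function.iterate_succ', preimage_comp, hXc]
    _ = _ := preimage_thickening_of_dist_eq_mul (hσ.iterate _) (pow_pos hα _)
        (dist_iterate_eq_pow_mul hsim _) _ _

theorem resilient_is_erosion_of_scaleInvariant {n : ℕ}
    (X : Set (EuclideanSpace ℝ (Fin n)))
    (σ : EuclideanSpace ℝ (Fin n) → EuclideanSpace ℝ (Fin n))
    (hσ : Function.Surjective σ) (α : ℝ) (hα : 1 < α)
    (hsim : ∀ x y, dist (σ x) (σ y) = α * dist x y)
    (r : ℝ) (hr : 0 < r) (h : eros r X = σ '' X) :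
    σ '' (⋃ k : ℕ, (σ^[k + 1]) ⁻¹' X) = ⋃ k : ℕ, (σ^[k + 1]) ⁻¹' X ∧
      X = eros (r / (α - 1)) (⋃ k : ℕ, (σ^[k + 1]) ⁻¹' X) := by
  have hα0 : 0 < α := by linarith
  refine ⟨image_iUnion_preimage_iterate_succ hσ (mapsTo_iff_image_subset.2 (h ▸ sep_subset _ _)),
    ?_⟩
  have hC := preimage_iterate_compl_eq_thickening hσ hα0 hsim hr h
  have hε : ∀ k : ℕ, 0 < r / α ^ (k + 1) := fun k => by positivity
  have hWc : (⋃ k : ℕ, σ^[k + 1] ⁻¹' X)ᶜ = ⋂ k : ℕ, σ^[k] ⁻¹' Xᶜ := by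
    simp_rw [compl_iUnion, ← preimage_compl]
    exact (antitone_of_eq_thickening hε hC).iInter_nat_add 1
  have hXc : Xᶜ = thickening (r / (α - 1)) (⋃ k : ℕ, σ^[k + 1] ⁻¹' X)ᶜ := by
    rw [hWc, ← (hasSum_div_pow_succ hα r).tsum_eq]
    exact eq_thickening_tsum_iInter hε (hasSum_div_pow_succ hα r).summable hC
  rw [eros_eq_compl_thickening (div_pos hr (by linarith)), ← hXc, compl_compl]
end
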